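/- For every n ≥ 1, the number f(n+1) of binary rotation words of length n+1 satisfies f(n+1) ≤ f_pairs(n) + 2, where f_pairs(n) is the number of ordered pairs (u,v) of distinct binary words of length n such that u, v ∈ St(n,α) for some common slope α ∈ (0,1/2). -/

import Mathlib

open scoped Classical

/-- Membership of `x` in the circular interval `[β,γ)`: it means `β ≤ x < γ`
when `β < γ`; `x ≥ β` or `x < γ` when `γ < β`; and never holds when `β = γ`. -/
def inCirc (β γ x : ℝ) : Prop :=
  if β < γ then β ≤ x ∧ x < γ
  else if γ < β then β ≤ x ∨ x < γ
  else False

/-- The rotation word `r(α,β,γ,n)` as a list of booleans of length `n`: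
its `i`-th letter is `1` iff the fractional part `{iα}` lies in `[β,γ)`. -/
noncomputable def rotWord (α β γ : ℝ) (n : ℕ) : List Bool :=
  (List.range n).map fun i => if inCirc β γ (Int.fract (i * α)) then true else false

/-- The set `R(n)` of all rotation words of length `n`. -/
def RotWords (n : ℕ) : Set (List Bool) :=
  {w | ∃ α ∈ Set.Ico (0:ℝ) 1, ∃ β ∈ Set.Ico (0:ℝ) 1, ∃ γ ∈ Set.Ico (0:ℝ) 1,
    w = rotWord α β γ n}

/-- `numRot n = f(n)` is the number of binary rotation words of length `n`. -/
noncomputable def numRot (n : ℕ) : ℕ := (RotWords n).ncard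

/-- The set `St(n,α)` of Sturmian words of length `n` and slope `α`:
rotation words `r(α,β,{β+α},n)`, `β ∈ [0,1)`. -/
def St (n : ℕ) (α : ℝ) : Set (List Bool) :=
  {w | ∃ β ∈ Set.Ico (0:ℝ) 1, w = rotWord α β (Int.fract (β + α)) n}

/-- The set of ordered pairs `(u,v)` of distinct binary words of length `n`
such that `u, v ∈ St(n,α)` for some common slope `α ∈ (0,1/2)`. -/
def SturmianPairs (n : ℕ) : Set (List Bool × List Bool) :=
  {p | p.1 ≠ p.2 ∧ ∃ α ∈ Set.Ioo (0:ℝ) (1/2 : ℝ), p.1 ∈ St n α ∧ p.2 ∈ St n α}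

/-- `f_pairs(n)` is the number of such pairs. -/
noncomputable def fpairs (n : ℕ) : ℕ := (SturmianPairs n).ncard

/-!
Let `w` be the rotation word of `(α, β, γ)` with `β ≠ γ`, and let `u`, `v` be the Sturmian words
of slope `α` whose arcs are `[β - α, β)` and `[γ - α, γ)`. Under the rotation by `α` a point enters
`[β, γ)` exactly when it crosses `β` and leaves it exactly when it crosses `γ`, so
`w_{i+1} - w_i = u_i - v_i`. A nonconstant `0/1` sequence is determined by its increments, so
`w ↦ (u, v)` is injective on the nonconstant words, and `u ≠ v` for them; the two constant words
account for the `+ 2`.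

The slope can be taken in `(0, 1/2)`: the slopes `α` and `1 - α` give mirror-image words (after
shifting the arc slightly, to close it at the other end), and the nonconstant words of slope `1/2`
are alternating, which is also realised by slopes slightly below `1/2`.
-/

open Set Filter Topology

section Circle

variable {α β γ δ x : ℝ}

lemma fract_sub_fract (x y : ℝ) : Int.fract (x - Int.fract y) = Int.fract (x - y) :=
  Int.fract_eq_fract.2 ⟨⌊y⌋, by rw [← Int.self_sub_fract]; ring⟩

lemma fract_fract_sub (x y : ℝ) : Int.fract (Int.fract x - y) = Int.fract (x - y) :=
  Int.fract_eq_fract.2 ⟨-⌊x⌋, by rw [Int.fract]; push_cast; ring⟩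

lemma fract_fract_add (x y : ℝ) : Int.fract (Int.fract x + y) = Int.fract (x + y) :=
  Int.fract_eq_fract.2 ⟨-⌊x⌋, by rw [Int.fract]; push_cast; ring⟩

lemma fract_add_of_mem_Ico {s t : ℝ} (hs : s ∈ Ico (0 : ℝ) 1) (ht : t ∈ Ico (0 : ℝ) 1) :
    Int.fract (s + t) = if s + t < 1 then s + t else s + t - 1 := by
  split_ifs with h
  · exact Int.fract_eq_self.2 ⟨by linarith [hs.1, ht.1], h⟩
  · rw [← Int.fract_sub_one, Int.fract_eq_self]
    constructor <;> linarith [hs.2, ht.2]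

lemma fract_sub_of_mem_Ico {s t : ℝ} (hs : s ∈ Ico (0 : ℝ) 1) (ht : t ∈ Ico (0 : ℝ) 1) :
    Int.fract (s - t) = if t ≤ s then s - t else s - t + 1 := by
  split_ifs with h
  · exact Int.fract_eq_self.2 ⟨by linarith, by linarith [hs.2, ht.1]⟩
  · rw [← Int.fract_add_one, Int.fract_eq_self]
    constructor <;> linarith [hs.1, ht.2]

lemma fract_sub_pos (hβ : β ∈ Ico (0 : ℝ) 1) (hγ : γ ∈ Ico (0 : ℝ) 1) (h : β ≠ γ) :
    0 < Int.fract (γ - β) := by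
  rw [fract_sub_of_mem_Ico hγ hβ]
  split_ifs with hle
  · exact sub_pos.2 (lt_of_le_of_ne hle h)
  · linarith [hγ.1, hβ.2]

lemma inCirc_self : ¬ inCirc β β x := by
  simp [inCirc]

lemma inCirc_swap (h : β ≠ γ) : inCirc γ β x ↔ ¬ inCirc β γ x := by
  unfold inCirc
  rcases h.lt_or_gt with h | h
  · simp only [if_neg h.not_gt, if_pos h, not_and_or, not_le, not_lt]; tauto
  · simp only [if_pos h, if_neg h.not_gt, not_or, not_le, not_lt]; tauto

lemma inCirc_fract_iff (hβ : β ∈ Ico (0 : ℝ) 1) (hγ : γ ∈ Ico (0 : ℝ) 1) (h : β ≠ γ) (x : ℝ) :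
    inCirc β γ (Int.fract x) ↔ Int.fract (x - β) < Int.fract (γ - β) := by
  have hx : Int.fract x ∈ Ico (0 : ℝ) 1 := ⟨Int.fract_nonneg x, Int.fract_lt_one x⟩
  rw [← fract_fract_sub, fract_sub_of_mem_Ico hx hβ, fract_sub_of_mem_Ico hγ hβ]
  obtain ⟨hx0, hx1⟩ := hx
  obtain ⟨hβ0, hβ1⟩ := hβ
  obtain ⟨hγ0, hγ1⟩ := hγ
  unfold inCirc
  rcases h.lt_or_gt with h | h
  · simp only [if_pos h, if_pos h.le]
    split_ifs <;> constructor <;> intro h' <;> (try obtain ⟨h', h''⟩ := h') <;>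
      (try constructor) <;> linarith
  · simp only [if_neg h.not_gt, if_pos h, if_neg h.not_ge]
    split_ifs <;> constructor <;> intro h' <;> (try obtain h' | h' := h') <;>
      first | linarith | (left; linarith) | (right; linarith)

lemma inCirc_fract_add_iff (hβ : β ∈ Ico (0 : ℝ) 1) (hδ : δ ∈ Ioo (0 : ℝ) 1) (x : ℝ) :
    inCirc β (Int.fract (β + δ)) (Int.fract x) ↔ Int.fract (x - β) < δ := by
  have hlen : Int.fract (Int.fract (β + δ) - β) = δ := by
    rw [fract_fract_sub, add_sub_cancel_left, Int.fract_eq_self]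
    exact ⟨hδ.1.le, hδ.2⟩
  have hne : β ≠ Int.fract (β + δ) := by
    intro h
    rw [← h, sub_self, Int.fract_zero] at hlen
    exact hδ.1.ne hlen
  rw [inCirc_fract_iff hβ ⟨Int.fract_nonneg _, Int.fract_lt_one _⟩ hne, hlen]

/-- Rotating by `α`, a point enters `[0, δ)` exactly when it crosses `0`, that is, when it lands
in `[0, α)`, and leaves exactly when it crosses `δ`, that is, when it lands in `[δ, δ + α)`. -/
lemma toNat_decide_fract_add_lt (hα : α ∈ Ioo (0 : ℝ) 1) (hδ : δ ∈ Ioo (0 : ℝ) 1) (x : ℝ) :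
    (decide (Int.fract (x + α) < δ)).toNat + (decide (Int.fract (x + α - δ) < α)).toNat
      = (decide (Int.fract x < δ)).toNat + (decide (Int.fract (x + α) < α)).toNat := by
  have hx : Int.fract x ∈ Ico (0 : ℝ) 1 := ⟨Int.fract_nonneg x, Int.fract_lt_one x⟩
  have hα' : α ∈ Ico (0 : ℝ) 1 := ⟨hα.1.le, hα.2⟩
  have hδ' : δ ∈ Ico (0 : ℝ) 1 := ⟨hδ.1.le, hδ.2⟩
  have hy : Int.fract (x + α) ∈ Ico (0 : ℝ) 1 := ⟨Int.fract_nonneg _, Int.fract_lt_one _⟩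
  rw [← fract_fract_sub (x + α), fract_sub_of_mem_Ico hy hδ', ← fract_fract_add x,
    fract_add_of_mem_Ico hx hα']
  obtain ⟨hx0, hx1⟩ := hx
  obtain ⟨hα0, hα1⟩ := hα
  obtain ⟨hδ0, hδ1⟩ := hδ
  split_ifs <;> simp only [Bool.toNat, decide_eq_true_eq, cond_eq_ite] <;> split_ifs <;> linarith

lemma fract_neg_lt_iff (hδ : δ ∈ Ioo (0 : ℝ) 1) (p : ℝ) :
    Int.fract (-p) < δ ↔ Int.fract (p + δ) ∈ Ioc 0 δ := by
  have hq : Int.fract p ∈ Ico (0 : ℝ) 1 := ⟨Int.fract_nonneg p, Int.fract_lt_one p⟩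
  rw [← zero_sub, ← fract_sub_fract, fract_sub_of_mem_Ico ⟨le_rfl, one_pos⟩ hq,
    ← fract_fract_add, fract_add_of_mem_Ico hq ⟨hδ.1.le, hδ.2⟩, mem_Ioc]
  obtain ⟨hq0, hq1⟩ := hq
  obtain ⟨hδ0, hδ1⟩ := hδ
  split_ifs <;> constructor <;> intro h <;> (try obtain ⟨h, h'⟩ := h) <;>
    (try constructor) <;> linarith

lemma eventually_fract_sub_lt_iff (hδ : δ ∈ Ioo (0 : ℝ) 1) (s : ℝ) :
    ∀ᶠ ε in 𝓝[>] 0, Int.fract (s - ε) < δ ↔ Int.fract s ∈ Ioc 0 δ := by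
  obtain ⟨hδ0, hδ1⟩ := hδ
  have hs : Int.fract s ∈ Ico (0 : ℝ) 1 := ⟨Int.fract_nonneg s, Int.fract_lt_one s⟩
  have hsub : ∀ ε ∈ Ioo (0 : ℝ) 1, Int.fract (s - ε) =
      if ε ≤ Int.fract s then Int.fract s - ε else Int.fract s - ε + 1 := fun ε hε => by
    rw [← fract_fract_sub, fract_sub_of_mem_Ico hs ⟨hε.1.le, hε.2⟩]
  obtain ⟨hs0, hs1⟩ := hs
  rcases hs0.eq_or_lt with h0 | h0
  · filter_upwards [Ioo_mem_nhdsGT (sub_pos.2 hδ1)] with ε hε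
    rw [hsub ε ⟨hε.1, by linarith [hε.2]⟩, ← h0, if_neg (by linarith [hε.1])]
    simp only [mem_Ioc, lt_irrefl, false_and, iff_false, not_lt]
    linarith [hε.2]
  rcases le_or_gt (Int.fract s) δ with hδs | hδs
  · filter_upwards [Ioo_mem_nhdsGT h0] with ε hε
    rw [hsub ε ⟨hε.1, by linarith [hε.2]⟩, if_pos hε.2.le]
    exact iff_of_true (by linarith [hε.1]) ⟨h0, hδs⟩
  · filter_upwards [Ioo_mem_nhdsGT (sub_pos.2 hδs)] with ε hε
    rw [hsub ε ⟨hε.1, by linarith [hε.2]⟩, if_pos (by linarith [hε.2])]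
    exact iff_of_false (by linarith [hε.2]) fun h => by linarith [h.2]

lemma exists_fract_sub_lt_iff (hδ : δ ∈ Ioo (0 : ℝ) 1) (a : ℝ) (V : Finset ℝ) :
    ∃ b ∈ Ico (0 : ℝ) 1, ∀ y ∈ V, Int.fract (y - b) < δ ↔ Int.fract (y - a) ∈ Ioc 0 δ := by
  obtain ⟨ε, hε⟩ :=
    ((Finset.eventually_all V).2 fun y _ => eventually_fract_sub_lt_iff hδ (y - a)).exists
  refine ⟨Int.fract (a + ε), ⟨Int.fract_nonneg _, Int.fract_lt_one _⟩, fun y hy => ?_⟩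
  rw [fract_sub_fract, ← sub_sub]
  exact hε y hy

end Circle

section RotWord
variable {α β γ α' β' γ' : ℝ} {m : ℕ}

lemma rotWord_eq_map (α β γ : ℝ) (m : ℕ) :
    rotWord α β γ m = (List.range m).map fun i : ℕ => decide (inCirc β γ (Int.fract (i * α))) := by
  simp [rotWord, ← List.map_eq_flatMap]

lemma length_rotWord (α β γ : ℝ) (m : ℕ) : (rotWord α β γ m).length = m := by
  simp [rotWord_eq_map]

lemma getD_rotWord {i : ℕ} (hi : i < m) :
    (rotWord α β γ m).getD i false = decide (inCirc β γ (Int.fract (i * α))) := by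
  simp [rotWord_eq_map, hi]

lemma rotWord_congr
    (h : ∀ i < m, inCirc β γ (Int.fract (i * α)) ↔ inCirc β' γ' (Int.fract (i * α'))) :
    rotWord α β γ m = rotWord α' β' γ' m := by
  simp only [rotWord_eq_map]
  exact List.map_congr_left fun i hi => decide_eq_decide.2 (h i (List.mem_range.1 hi))

lemma rotWord_eq_replicate {P : Prop} [Decidable P]
    (h : ∀ i < m, inCirc β γ (Int.fract (i * α)) ↔ P) :
    rotWord α β γ m = List.replicate m (decide P) := by
  rw [rotWord_eq_map, List.eq_replicate_iff]
  simp only [List.length_map, List.length_range, List.mem_map, List.mem_range, true_and]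
  rintro _ ⟨i, hi, rfl⟩
  exact decide_eq_decide.2 (h i hi)

lemma ne_of_forall_rotWord_ne_replicate (h : ∀ b, rotWord α β γ m ≠ List.replicate m b) :
    β ≠ γ := by
  rintro rfl
  exact h _ (rotWord_eq_replicate (P := False) fun _ _ => iff_false_intro inCirc_self)

lemma length_of_mem_St {n : ℕ} {w : List Bool} (hw : w ∈ St n α) : w.length = n := by
  obtain ⟨β, -, rfl⟩ := hw
  exact length_rotWord ..

lemma finite_sturmianPairs (n : ℕ) : (SturmianPairs n).Finite := by
  refine ((List.finite_length_eq Bool n).prod (List.finite_length_eq Bool n)).subset ?_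
  rintro p ⟨-, α, -, h₁, h₂⟩
  exact ⟨length_of_mem_St h₁, length_of_mem_St h₂⟩

end RotWord

section Increments
variable {n : ℕ}

/-- `w_{i+1} - w_i = u_i - v_i` for `i < n`, where `p = (u, v)`, written without subtraction. -/
def HasIncrements (n : ℕ) (w : List Bool) (p : List Bool × List Bool) : Prop :=
  ∀ i < n, (w.getD (i + 1) false).toNat + (p.2.getD i false).toNat
    = (w.getD i false).toNat + (p.1.getD i false).toNat

lemma eqOn_of_toNat_increments {a b : ℕ → Bool}
    (h : ∀ i < n, (a (i + 1)).toNat + (b i).toNat = (b (i + 1)).toNat + (a i).toNat)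
    (ha : ∃ i ≤ n, a i ≠ a 0) : ∀ i ≤ n, a i = b i := by
  have hconst : ∀ i ≤ n, (a i).toNat + (b 0).toNat = (b i).toNat + (a 0).toNat := by
    intro i hi
    induction i with
    | zero => exact add_comm _ _
    | succ i ih => have := h i hi; have := ih (by omega); omega
  obtain ⟨k, hk, hak⟩ := ha
  have h0 : a 0 = b 0 := by
    have := hconst k hk
    revert this hak
    cases a k <;> cases a 0 <;> cases b k <;> cases b 0 <;> simp
  intro i hi
  have := hconst i hi
  rw [h0] at this
  revert this
  cases a i <;> cases b i <;> cases b 0 <;> simp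

lemma eq_of_hasIncrements {w w' : List Bool} {p : List Bool × List Bool}
    (hw : w.length = n + 1) (hw' : w'.length = n + 1) (hnc : ∀ b, w ≠ List.replicate (n + 1) b)
    (h : HasIncrements n w p) (h' : HasIncrements n w' p) : w = w' := by
  have hw₀ : ∃ i ≤ n, w.getD i false ≠ w.getD 0 false := by
    by_contra! hc
    refine hnc (w.getD 0 false) (List.ext_getElem (by simp [hw]) fun i h₁ _ => ?_)
    rw [← List.getD_eq_getElem _ false, List.getElem_replicate]
    exact hc i (by omega)
  have key := eqOn_of_toNat_increments (a := fun i => w.getD i false)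
    (b := fun i => w'.getD i false) (fun i hi => by have := h i hi; have := h' i hi; omega) hw₀
  refine List.ext_getElem (hw.trans hw'.symm) fun i h₁ h₂ => ?_
  rw [← List.getD_eq_getElem _ false, ← List.getD_eq_getElem _ false]
  exact key i (by omega)

lemma fst_ne_snd_of_hasIncrements {w : List Bool} {p : List Bool × List Bool}
    (hw : w.length = n + 1) (hnc : ∀ b, w ≠ List.replicate (n + 1) b) (h : HasIncrements n w p) :
    p.1 ≠ p.2 := by
  intro hp
  refine hnc (w.getD 0 false) (eq_of_hasIncrements hw (List.length_replicate ..) hnc h ?_)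
  intro i hi
  simp [hp, hi, Nat.lt_succ_of_lt hi]

end Increments

lemma hasIncrements_rotWord {α β γ : ℝ} (hα : α ∈ Ioo (0 : ℝ) 1) (hβ : β ∈ Ico (0 : ℝ) 1)
    (hγ : γ ∈ Ico (0 : ℝ) 1) (hβγ : β ≠ γ) (n : ℕ) :
    HasIncrements n (rotWord α β γ (n + 1))
      (rotWord α (Int.fract (β - α)) (Int.fract (Int.fract (β - α) + α)) n,
       rotWord α (Int.fract (γ - α)) (Int.fract (Int.fract (γ - α) + α)) n) := by
  intro i hi
  have hδ : Int.fract (γ - β) ∈ Ioo (0 : ℝ) 1 := ⟨fract_sub_pos hβ hγ hβγ, Int.fract_lt_one _⟩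
  have hfract : ∀ y : ℝ, Int.fract y ∈ Ico (0 : ℝ) 1 :=
    fun y => ⟨Int.fract_nonneg y, Int.fract_lt_one y⟩
  simp only [getD_rotWord hi, getD_rotWord (Nat.lt_succ_of_lt hi),
    getD_rotWord (Nat.succ_lt_succ hi)]
  rw [inCirc_fract_iff hβ hγ hβγ, inCirc_fract_iff hβ hγ hβγ, inCirc_fract_add_iff (hfract _) hα,
    inCirc_fract_add_iff (hfract _) hα, fract_sub_fract, fract_sub_fract]
  convert toNat_decide_fract_add_lt hα hδ (i * α - β) using 5
  · push_cast; ring_nf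
  · rw [fract_sub_fract]; ring_nf
  · ring_nf

section Normalization
variable {α β γ : ℝ} {n : ℕ}

lemma exists_rotWord_one_sub_eq (hβ : β ∈ Ico (0 : ℝ) 1) (hγ : γ ∈ Ico (0 : ℝ) 1) (hβγ : β ≠ γ)
    (α : ℝ) (m : ℕ) :
    ∃ β' ∈ Ico (0 : ℝ) 1, ∃ γ' ∈ Ico (0 : ℝ) 1, rotWord (1 - α) β' γ' m = rotWord α β γ m := by
  set δ := Int.fract (γ - β)
  have hδ : δ ∈ Ioo (0 : ℝ) 1 := ⟨fract_sub_pos hβ hγ hβγ, Int.fract_lt_one _⟩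
  obtain ⟨b, hb, hV⟩ := exists_fract_sub_lt_iff hδ (-(β + δ))
    ((Finset.range m).image fun i : ℕ => i * (1 - α))
  refine ⟨b, hb, Int.fract (b + δ), ⟨Int.fract_nonneg _, Int.fract_lt_one _⟩,
    rotWord_congr fun i hi => ?_⟩
  rw [inCirc_fract_add_iff hb hδ, hV _ (Finset.mem_image_of_mem _ (Finset.mem_range.2 hi)),
    inCirc_fract_iff hβ hγ hβγ, show (i : ℝ) * (1 - α) - -(β + δ) = i * (1 - α) + β + δ by ring,
    ← fract_neg_lt_iff hδ, show -(i * (1 - α) + β) = i * α - β - i by ring, Int.fract_sub_natCast]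

lemma fract_natCast_mul_half (i : ℕ) :
    Int.fract ((i : ℝ) * (1 / 2)) = if Even i then 0 else 1 / 2 := by
  obtain ⟨k, rfl | rfl⟩ := Nat.even_or_odd' i
  · simp [mul_comm (2 : ℝ)]
  · rw [if_neg (Nat.not_even_iff_odd.2 (odd_two_mul_add_one k)), Int.fract_eq_iff]
    refine ⟨by norm_num, by norm_num, k, by push_cast; ring⟩

lemma inCirc_fract_mul_half_sub_iff {i : ℕ} (hi : i ≤ n) :
    inCirc (3 / 4) (1 / 4) (Int.fract (i * (1 / 2 - 1 / (4 * (n + 1))))) ↔ Even i := by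
  set ε : ℝ := 1 / (4 * (n + 1))
  have hiε : (i : ℝ) * ε < 1 / 4 := by
    rw [mul_one_div, div_lt_div_iff₀ (by positivity) (by norm_num)]
    linarith [(Nat.cast_le (α := ℝ)).2 hi]
  have hiε0 : 0 ≤ (i : ℝ) * ε := by positivity
  rw [inCirc_fract_iff (by norm_num) (by norm_num) (by norm_num),
    show Int.fract ((1 : ℝ) / 4 - 3 / 4) = 1 / 2 by norm_num [Int.fract_eq_iff]]
  obtain ⟨k, rfl | rfl⟩ := Nat.even_or_odd' i
  · have h : Int.fract ((2 * k : ℕ) * (1 / 2 - ε) - 3 / 4) = 1 / 4 - (2 * k : ℕ) * ε :=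
      Int.fract_eq_iff.2 ⟨by linarith, by linarith, k - 1, by push_cast; ring⟩
    rw [h]
    exact iff_of_true (by linarith) (even_two_mul k)
  · have h : Int.fract ((2 * k + 1 : ℕ) * (1 / 2 - ε) - 3 / 4) = 3 / 4 - (2 * k + 1 : ℕ) * ε :=
      Int.fract_eq_iff.2 ⟨by linarith, by linarith, k - 1, by push_cast; ring⟩
    rw [h]
    exact iff_of_false (by linarith) (Nat.not_even_iff_odd.2 (odd_two_mul_add_one k))

lemma exists_rotWord_eq_rotWord_half
    (hnc : ∀ b, rotWord (1 / 2) β γ (n + 1) ≠ List.replicate (n + 1) b) :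
    ∃ α' ∈ Ioo (0 : ℝ) (1 / 2), ∃ β' ∈ Ico (0 : ℝ) 1, ∃ γ' ∈ Ico (0 : ℝ) 1,
      rotWord α' β' γ' (n + 1) = rotWord (1 / 2) β γ (n + 1) := by
  have hletter : ∀ i : ℕ, inCirc β γ (Int.fract (i * (1 / 2))) ↔
      if Even i then inCirc β γ 0 else inCirc β γ (1 / 2) := fun i => by
    rw [fract_natCast_mul_half]; split_ifs <;> rfl
  by_cases hconst : inCirc β γ 0 ↔ inCirc β γ (1 / 2)
  · refine absurd (rotWord_eq_replicate (P := inCirc β γ 0) fun i _ => ?_) (hnc _)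
    rw [hletter]; split_ifs <;> tauto
  have hα' : 1 / 2 - 1 / (4 * ((n : ℝ) + 1)) ∈ Ioo (0 : ℝ) (1 / 2) := by
    constructor
    · rw [sub_pos, div_lt_div_iff₀ (by positivity) (by norm_num)]
      linarith [(Nat.cast_nonneg (α := ℝ) n)]
    · simp only [sub_lt_self_iff]; positivity
  refine ⟨_, hα', ?_⟩
  by_cases h0 : inCirc β γ 0
  · refine ⟨3 / 4, by norm_num, 1 / 4, by norm_num, rotWord_congr fun i hi => ?_⟩
    rw [inCirc_fract_mul_half_sub_iff (by omega), hletter]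
    split_ifs <;> tauto
  · refine ⟨1 / 4, by norm_num, 3 / 4, by norm_num, rotWord_congr fun i hi => ?_⟩
    rw [inCirc_swap (by norm_num), inCirc_fract_mul_half_sub_iff (by omega), hletter]
    split_ifs <;> tauto

lemma exists_rotWord_eq_of_slope_lt_half (hα : α ∈ Ico (0 : ℝ) 1) (hβ : β ∈ Ico (0 : ℝ) 1)
    (hγ : γ ∈ Ico (0 : ℝ) 1) (hnc : ∀ b, rotWord α β γ (n + 1) ≠ List.replicate (n + 1) b) :
    ∃ α' ∈ Ioo (0 : ℝ) (1 / 2), ∃ β' ∈ Ico (0 : ℝ) 1, ∃ γ' ∈ Ico (0 : ℝ) 1,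
      rotWord α' β' γ' (n + 1) = rotWord α β γ (n + 1) := by
  rcases hα.1.eq_or_lt with rfl | hα0
  · exact absurd (rotWord_eq_replicate (P := inCirc β γ 0) fun i _ => by simp) (hnc _)
  rcases lt_trichotomy α (1 / 2) with h | rfl | h
  · exact ⟨α, ⟨hα0, h⟩, β, hβ, γ, hγ, rfl⟩
  · exact exists_rotWord_eq_rotWord_half hnc
  · obtain ⟨β', hβ', γ', hγ', he⟩ :=
      exists_rotWord_one_sub_eq hβ hγ (ne_of_forall_rotWord_ne_replicate hnc) α (n + 1)
    exact ⟨1 - α, ⟨by linarith [hα.2], by linarith⟩, β', hβ', γ', hγ', he⟩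

end Normalization

lemma exists_mem_sturmianPairs_hasIncrements {n : ℕ} {w : List Bool} (hw : w ∈ RotWords (n + 1))
    (hnc : ∀ b, w ≠ List.replicate (n + 1) b) : ∃ p ∈ SturmianPairs n, HasIncrements n w p := by
  obtain ⟨α₀, hα₀, β₀, hβ₀, γ₀, hγ₀, rfl⟩ := hw
  obtain ⟨α, hα, β, hβ, γ, hγ, he⟩ := exists_rotWord_eq_of_slope_lt_half hα₀ hβ₀ hγ₀ hnc
  rw [← he] at hnc ⊢
  have hinc := hasIncrements_rotWord ⟨hα.1, by linarith [hα.2]⟩ hβ hγ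
    (ne_of_forall_rotWord_ne_replicate hnc) n
  have hSt : ∀ β : ℝ, rotWord α (Int.fract β) (Int.fract (Int.fract β + α)) n ∈ St n α :=
    fun β => ⟨_, ⟨Int.fract_nonneg β, Int.fract_lt_one β⟩, rfl⟩
  exact ⟨_, ⟨fst_ne_snd_of_hasIncrements (length_rotWord ..) hnc hinc, α, hα, hSt _, hSt _⟩, hinc⟩

theorem numRot_le_fpairs_general (n : ℕ) :
    numRot (n + 1) ≤ fpairs n + 2 := by
  set C : Set (List Bool) := {List.replicate (n + 1) false, List.replicate (n + 1) true}
  have hR : ∀ w ∈ RotWords (n + 1) \ C,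
      w.length = n + 1 ∧ ∀ b, w ≠ List.replicate (n + 1) b := by
    rintro _ ⟨⟨α, -, β, -, γ, -, rfl⟩, hC⟩
    exact ⟨length_rotWord .., fun b h => hC (by cases b <;> simp [C, h])⟩
  choose! f hfS hf using fun w hw => exists_mem_sturmianPairs_hasIncrements hw.1 (hR w hw).2
  have hinj : InjOn f (RotWords (n + 1) \ C) := fun w hw w' hw' he =>
    eq_of_hasIncrements (hR w hw).1 (hR w' hw').1 (hR w hw).2 (hf w hw) (he ▸ hf w' hw')
  calc numRot (n + 1) ≤ (RotWords (n + 1) \ C).ncard + C.ncard :=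
        Set.ncard_le_ncard_sdiff_add_ncard _ _ C.toFinite
    _ ≤ fpairs n + 2 :=
        add_le_add (Set.ncard_le_ncard_of_injOn f hfS hinj (finite_sturmianPairs n))
          ((Set.ncard_insert_le _ _).trans (by simp))

/-- For every `n ≥ 1`, `f(n+1) ≤ f_pairs(n) + 2`. -/
theorem numRot_le_fpairs (n : ℕ) (hn : 1 ≤ n) :
    numRot (n + 1) ≤ fpairs n + 2 :=
  numRot_le_fpairs_general n
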